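/- Let G(cos θ) = 4 ∫₀^∞ ∫₀^∞ r₁ r₂ e^{−(r₁²+r₂²)} log r₁ · log max(r₁ cos θ, r₂ sin θ) dr₁ dr₂ for θ ∈ (0, π/2). Then G(cos θ) decomposes as G₁ + G₂ where G₁(cos θ) = C₁ + C₂ log cos θ for constants C₁, C₂ independent of θ, and G₂(cos θ) = 4 ∫₀^∞ ∫_{π/2−θ}^{π/2} ρ³ e^{−ρ²} log(ρ cos φ) log(tan φ tan θ) cos φ sin φ dφ dρ. -/

import Mathlib

open Real MeasureTheory Set

private lemma abs_log_le' {x : ℝ} (hx : 0 < x) :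
    |Real.log x| ≤ 2 * (x ^ (1/2:ℝ) + x ^ (-(1/2):ℝ)) := by
  have h1 : (0:ℝ) ≤ x ^ (1/2:ℝ) := Real.rpow_nonneg hx.le _
  have h2 : (0:ℝ) ≤ x ^ (-(1/2):ℝ) := Real.rpow_nonneg hx.le _
  rcases le_or_gt 1 x with h | h
  · rw [abs_of_nonneg (Real.log_nonneg h)]
    nlinarith [Real.log_le_rpow_div hx.le (by norm_num : (0:ℝ) < 1/2)]
  · have hneg : Real.log x ≤ 0 := Real.log_nonpos hx.le h.le
    rw [abs_of_nonpos hneg]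
    have hinv : Real.log x⁻¹ ≤ (x⁻¹) ^ (1/2:ℝ) / (1/2) :=
      Real.log_le_rpow_div (by positivity) (by norm_num)
    rw [Real.log_inv, Real.inv_rpow hx.le, ← Real.rpow_neg hx.le] at hinv
    nlinarith

private lemma intD {t : ℝ} (ht : 0 < t) :
    IntegrableOn (fun r : ℝ => r ^ t * Real.exp (-r ^ 2) * (1 + |Real.log r|) ^ 2)
      (Set.Ioi 0) := by
  have hint : IntegrableOn (fun r : ℝ =>
      9 * (r ^ (t+1) * Real.exp (-1 * r ^ 2)) + 18 * (r ^ t * Real.exp (-1 * r ^ 2))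
        + 9 * (r ^ (t-1) * Real.exp (-1 * r ^ 2))) (Set.Ioi 0) := by
    refine (((integrableOn_rpow_mul_exp_neg_mul_sq one_pos (by linarith : (-1:ℝ) < t+1)).const_mul
      9).add ((integrableOn_rpow_mul_exp_neg_mul_sq one_pos (by linarith : (-1:ℝ) < t)).const_mul
      18)).add ((integrableOn_rpow_mul_exp_neg_mul_sq one_pos
      (by linarith : (-1:ℝ) < t-1)).const_mul 9)
  refine Integrable.mono' hint ?_ ?_
  · apply Measurable.aestronglyMeasurable
    exact (((Real.continuous_rpow_const ht.le).measurable).mul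
      ((measurable_id.pow_const 2).neg.exp)).mul
      ((measurable_const.add (Real.measurable_log.abs)).pow_const 2)
  · filter_upwards [ae_restrict_mem measurableSet_Ioi] with r (hr : (0:ℝ) < r)
    have e := Real.exp_pos (-r ^ 2)
    have h1 : (0:ℝ) ≤ r ^ (1/2:ℝ) := Real.rpow_nonneg hr.le _
    have h2 : (0:ℝ) ≤ r ^ (-(1/2):ℝ) := Real.rpow_nonneg hr.le _
    have ht0 : (0:ℝ) < r ^ t := Real.rpow_pos_of_pos hr _
    have hab : r ^ (1/2:ℝ) * r ^ (-(1/2):ℝ) = 1 := by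
      rw [← Real.rpow_add hr]; norm_num
    have hsum2 : (2:ℝ) ≤ r ^ (1/2:ℝ) + r ^ (-(1/2):ℝ) := by
      nlinarith [sq_nonneg (r ^ (1/2:ℝ) - r ^ (-(1/2):ℝ))]
    have hl : 1 + |Real.log r| ≤ 3 * (r ^ (1/2:ℝ) + r ^ (-(1/2):ℝ)) := by
      have := abs_log_le' hr
      linarith
    have ha2 : r ^ t * (r ^ (1/2:ℝ) * r ^ (1/2:ℝ)) = r ^ (t+1) := by
      rw [← Real.rpow_add hr, ← Real.rpow_add hr]; norm_num
    have hb2 : r ^ t * (r ^ (-(1/2):ℝ) * r ^ (-(1/2):ℝ)) = r ^ (t-1) := by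
      rw [← Real.rpow_add hr, ← Real.rpow_add hr]; congr 1; ring
    have hab2 : r ^ t * (r ^ (1/2:ℝ) * r ^ (-(1/2):ℝ)) = r ^ t := by
      rw [hab, mul_one]
    have hnn : (0:ℝ) ≤ r ^ t * Real.exp (-r^2) * (1 + |Real.log r|)^2 := by positivity
    rw [Real.norm_eq_abs, abs_of_nonneg hnn]
    have key : r ^ t * Real.exp (-r^2) * (1 + |Real.log r|)^2 ≤
        r ^ t * Real.exp (-r^2) * (3 * (r ^ (1/2:ℝ) + r ^ (-(1/2):ℝ)))^2 := by
      have h3 : (0:ℝ) ≤ 1 + |Real.log r| := by positivity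
      have h4 : (1 + |Real.log r|)^2 ≤ (3 * (r ^ (1/2:ℝ) + r ^ (-(1/2):ℝ)))^2 :=
        pow_le_pow_left₀ h3 hl 2
      exact mul_le_mul_of_nonneg_left h4 (by positivity)
    refine key.trans ?_
    have : Real.exp (-1 * r ^ 2) = Real.exp (-r ^ 2) := by norm_num
    rw [this]
    nlinarith [ha2, hb2, hab2]

private lemma intD1 : IntegrableOn
    (fun r : ℝ => r * Real.exp (-r ^ 2) * (1 + |Real.log r|) ^ 2) (Set.Ioi 0) := by
  refine (intD one_pos).congr_fun (fun r hr => ?_) measurableSet_Ioi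
  beta_reduce
  rw [Real.rpow_one]

private lemma intD3 : IntegrableOn
    (fun r : ℝ => r ^ 3 * Real.exp (-r ^ 2) * (1 + |Real.log r|) ^ 2) (Set.Ioi 0) := by
  refine (intD (by norm_num : (0:ℝ) < 3)).congr_fun (fun r hr => ?_) measurableSet_Ioi
  beta_reduce
  rw [show ((3:ℝ)) = ((3:ℕ):ℝ) by norm_num, Real.rpow_natCast]

private lemma ulog_bounds {u : ℝ} (h0 : 0 < u) (h1 : u ≤ 1) :
    u * |Real.log u| ≤ 4 ∧ u * |Real.log u| ^ 2 ≤ 16 := by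
  have h := abs_log_le' h0
  have ha : u ^ (1/2:ℝ) ≤ u ^ (-(1/2):ℝ) :=
    Real.rpow_le_rpow_of_exponent_ge h0 h1 (by norm_num)
  have hb : |Real.log u| ≤ 4 * u ^ (-(1/2):ℝ) := by linarith
  have hmul : u * u ^ (-(1/2):ℝ) = u ^ (1/2:ℝ) := by
    rw [show u * u ^ (-(1/2):ℝ) = u ^ (1:ℝ) * u ^ (-(1/2):ℝ) by rw [Real.rpow_one],
      ← Real.rpow_add h0]
    norm_num
  have hmul2 : u * (u ^ (-(1/2):ℝ)) ^ 2 = 1 := by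
    have : (u ^ (-(1/2):ℝ)) ^ 2 = u ^ (-1:ℝ) := by
      rw [← Real.rpow_natCast (u ^ (-(1/2):ℝ)) 2, ← Real.rpow_mul h0.le]; norm_num
    rw [this, show u * u ^ (-1:ℝ) = u ^ (1:ℝ) * u ^ (-1:ℝ) by rw [Real.rpow_one],
      ← Real.rpow_add h0]
    norm_num
  have hu12 : u ^ (1/2:ℝ) ≤ 1 := Real.rpow_le_one h0.le h1 (by norm_num)
  have hn : (0:ℝ) ≤ u ^ (-(1/2):ℝ) := Real.rpow_nonneg h0.le _
  constructor
  · calc u * |Real.log u| ≤ u * (4 * u ^ (-(1/2):ℝ)) :=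
        mul_le_mul_of_nonneg_left hb h0.le
      _ = 4 * u ^ (1/2:ℝ) := by rw [show u * (4 * u ^ (-(1/2):ℝ)) = 4 * (u * u ^ (-(1/2):ℝ)) by
            ring, hmul]
      _ ≤ 4 := by linarith
  · have hsq : |Real.log u| ^ 2 ≤ (4 * u ^ (-(1/2):ℝ)) ^ 2 :=
      pow_le_pow_left₀ (abs_nonneg _) hb 2
    calc u * |Real.log u| ^ 2 ≤ u * (4 * u ^ (-(1/2):ℝ)) ^ 2 :=
        mul_le_mul_of_nonneg_left hsq h0.le
      _ = 16 * (u * (u ^ (-(1/2):ℝ)) ^ 2) := by ring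
      _ = 16 := by rw [hmul2, mul_one]

private lemma log_max_eq {a b : ℝ} (ha : 0 < a) (hb : 0 < b) :
    Real.log (max a b) = max (Real.log a) (Real.log b) := by
  rcases le_total a b with h | h
  · rw [max_eq_right h, max_eq_right (Real.log_le_log ha h)]
  · rw [max_eq_left h, max_eq_left (Real.log_le_log hb h)]

private lemma logmax_decomp {r1 r2 c s : ℝ} (h1 : 0 < r1) (h2 : 0 < r2)
    (hc : 0 < c) (hs : 0 < s) :
    Real.log (max (r1 * c) (r2 * s)) =
      (Real.log r1 + Real.log c) + max (Real.log (r2 * s) - Real.log (r1 * c)) 0 := by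
  rw [log_max_eq (by positivity) (by positivity), ← Real.log_mul h1.ne' hc.ne']
  rcases le_total (Real.log (r1 * c)) (Real.log (r2 * s)) with h | h
  · rw [max_eq_right h, max_eq_left (by linarith)]; ring
  · rw [max_eq_left h, max_eq_right (by linarith)]; ring

private lemma dom2 {r1 r2 X c : ℝ} (h1 : 0 < r1) (h2 : 0 < r2) (hc : 0 ≤ c)
    (hX : |X| ≤ |Real.log r1| + |Real.log r2| + c + 1) :
    |r1 * r2 * Real.exp (-(r1 ^ 2 + r2 ^ 2)) * Real.log r1 * X| ≤
      (3 + c) * ((r1 * Real.exp (-r1 ^ 2) * (1 + |Real.log r1|) ^ 2) *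
                 (r2 * Real.exp (-r2 ^ 2) * (1 + |Real.log r2|) ^ 2)) := by
  have hE : Real.exp (-(r1 ^ 2 + r2 ^ 2)) = Real.exp (-r1 ^ 2) * Real.exp (-r2 ^ 2) := by
    rw [← Real.exp_add]; ring_nf
  set l1 := |Real.log r1| with hl1def
  set l2 := |Real.log r2| with hl2def
  have hl1 : 0 ≤ l1 := abs_nonneg _
  have hl2 : 0 ≤ l2 := abs_nonneg _
  have e1 := Real.exp_pos (-r1 ^ 2)
  have e2 := Real.exp_pos (-r2 ^ 2)
  have habs : |r1 * r2 * Real.exp (-(r1 ^ 2 + r2 ^ 2)) * Real.log r1 * X|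
      = r1 * r2 * (Real.exp (-r1 ^ 2) * Real.exp (-r2 ^ 2)) * l1 * |X| := by
    rw [abs_mul, abs_mul, abs_mul, abs_mul, hE, abs_of_pos h1, abs_of_pos h2,
      abs_of_pos (mul_pos e1 e2)]
  rw [habs]
  have step1 : r1 * r2 * (Real.exp (-r1 ^ 2) * Real.exp (-r2 ^ 2)) * l1 * |X| ≤
      r1 * r2 * (Real.exp (-r1 ^ 2) * Real.exp (-r2 ^ 2)) * l1 * (l1 + l2 + c + 1) :=
    mul_le_mul_of_nonneg_left hX (by positivity)
  refine step1.trans ?_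
  have p1 : l1 ≤ (1 + l1) ^ 2 := by nlinarith
  have p1' : l1 ^ 2 ≤ (1 + l1) ^ 2 := by nlinarith
  have p2 : (1:ℝ) ≤ (1 + l2) ^ 2 := by nlinarith
  have p12 : l1 * l2 ≤ (1 + l1) ^ 2 * (1 + l2) ^ 2 :=
    mul_le_mul p1 (by nlinarith) hl2 (by positivity)
  have q1 : (1 + l1) ^ 2 ≤ (1 + l1) ^ 2 * (1 + l2) ^ 2 :=
    le_mul_of_one_le_right (by positivity) p2
  have q2 : c * l1 ≤ c * ((1 + l1) ^ 2 * (1 + l2) ^ 2) :=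
    mul_le_mul_of_nonneg_left (p1.trans q1) hc
  have key : l1 * (l1 + l2 + c + 1) ≤ (3 + c) * ((1 + l1) ^ 2 * (1 + l2) ^ 2) := by
    nlinarith
  calc r1 * r2 * (Real.exp (-r1 ^ 2) * Real.exp (-r2 ^ 2)) * l1 * (l1 + l2 + c + 1)
      = (r1 * r2 * (Real.exp (-r1 ^ 2) * Real.exp (-r2 ^ 2))) * (l1 * (l1 + l2 + c + 1)) := by
        ring
    _ ≤ (r1 * r2 * (Real.exp (-r1 ^ 2) * Real.exp (-r2 ^ 2))) *
          ((3 + c) * ((1 + l1) ^ 2 * (1 + l2) ^ 2)) :=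
        mul_le_mul_of_nonneg_left key (by positivity)
    _ = (3 + c) * ((r1 * Real.exp (-r1 ^ 2) * (1 + l1) ^ 2) *
          (r2 * Real.exp (-r2 ^ 2) * (1 + l2) ^ 2)) := by ring

set_option maxHeartbeats 2000000 in
theorem G_decomposition :
    ∃ C₁ C₂ : ℝ, ∀ θ : ℝ, 0 < θ → θ < π / 2 →
      (4 * ∫ r1 in Set.Ioi (0:ℝ), ∫ r2 in Set.Ioi (0:ℝ),
          r1 * r2 * Real.exp (-(r1 ^ 2 + r2 ^ 2)) * Real.log r1 *
            Real.log (max (r1 * Real.cos θ) (r2 * Real.sin θ)))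
        = (C₁ + C₂ * Real.log (Real.cos θ))
          + 4 * ∫ ρ in Set.Ioi (0:ℝ), ∫ φ in (π / 2 - θ)..(π / 2),
              ρ ^ 3 * Real.exp (-ρ ^ 2) * Real.log (ρ * Real.cos φ) *
                Real.log (Real.tan φ * Real.tan θ) * Real.cos φ * Real.sin φ := by
  refine ⟨4 * ∫ p : ℝ × ℝ, (p.1 * p.2 * Real.exp (-(p.1 ^ 2 + p.2 ^ 2)) * Real.log p.1 *
      Real.log p.1)
      ∂((volume.restrict (Set.Ioi 0)).prod (volume.restrict (Set.Ioi 0))),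
    4 * ∫ p : ℝ × ℝ, (p.1 * p.2 * Real.exp (-(p.1 ^ 2 + p.2 ^ 2)) * Real.log p.1)
      ∂((volume.restrict (Set.Ioi 0)).prod (volume.restrict (Set.Ioi 0))), ?_⟩
  intro θ hθ0 hθ2
  have hπ := Real.pi_pos
  have hcos : 0 < Real.cos θ := Real.cos_pos_of_mem_Ioo ⟨by linarith, hθ2⟩
  have hsin : 0 < Real.sin θ := Real.sin_pos_of_pos_of_lt_pi hθ0 (by linarith)
  set μ : Measure ℝ := volume.restrict (Set.Ioi 0) with hμdef
  set c : ℝ := |Real.log (Real.cos θ)| + |Real.log (Real.sin θ)| with hcdef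
  have hc : 0 ≤ c := by positivity
  have hQmeas : MeasurableSet (Set.Ioi (0:ℝ) ×ˢ Set.Ioi (0:ℝ)) :=
    measurableSet_Ioi.prod measurableSet_Ioi
  have hμμ : μ.prod μ = (volume : Measure (ℝ × ℝ)).restrict (Set.Ioi 0 ×ˢ Set.Ioi 0) := by
    rw [hμdef, Measure.prod_restrict, ← Measure.volume_eq_prod]
  have hQmem : ∀ᵐ p ∂(μ.prod μ), p ∈ Set.Ioi (0:ℝ) ×ˢ Set.Ioi (0:ℝ) := by
    rw [hμμ]; exact ae_restrict_mem hQmeas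
  have hDD : Integrable (fun p : ℝ × ℝ => (3 + c) *
      ((p.1 * Real.exp (-p.1 ^ 2) * (1 + |Real.log p.1|) ^ 2) *
       (p.2 * Real.exp (-p.2 ^ 2) * (1 + |Real.log p.2|) ^ 2))) (μ.prod μ) :=
    (intD1.mul_prod intD1).const_mul _
  have hwm : Measurable (fun p : ℝ × ℝ => p.1 * p.2 * Real.exp (-(p.1 ^ 2 + p.2 ^ 2))) :=
    (measurable_fst.mul measurable_snd).mul
      (((measurable_fst.pow_const 2).add (measurable_snd.pow_const 2)).neg.exp)
  -- integrability of the four 2D integrands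
  have hFfull : Integrable (fun p : ℝ × ℝ => p.1 * p.2 * Real.exp (-(p.1 ^ 2 + p.2 ^ 2)) *
      Real.log p.1 * Real.log (max (p.1 * Real.cos θ) (p.2 * Real.sin θ))) (μ.prod μ) := by
    refine Integrable.mono' hDD (Measurable.aestronglyMeasurable
      ((hwm.mul measurable_fst.log).mul
        (((measurable_fst.mul_const _).max (measurable_snd.mul_const _)).log))) ?_
    filter_upwards [hQmem] with p hp
    obtain ⟨hp1, hp2⟩ := hp
    rw [Real.norm_eq_abs]
    refine dom2 hp1 hp2 hc ?_
    rw [log_max_eq (mul_pos hp1 hcos) (mul_pos hp2 hsin), Real.log_mul (ne_of_gt hp1) hcos.ne',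
      Real.log_mul (ne_of_gt hp2) hsin.ne']
    have h3 := abs_add_le (Real.log p.1) (Real.log (Real.cos θ))
    have h4 := abs_add_le (Real.log p.2) (Real.log (Real.sin θ))
    have h5 := abs_nonneg (Real.log p.1)
    have h6 := abs_nonneg (Real.log p.2)
    have h7 := abs_nonneg (Real.log (Real.cos θ))
    have h8 := abs_nonneg (Real.log (Real.sin θ))
    rcases le_total (Real.log p.1 + Real.log (Real.cos θ))
      (Real.log p.2 + Real.log (Real.sin θ)) with h | h
    · rw [max_eq_right h]; rw [hcdef]; linarith
    · rw [max_eq_left h]; rw [hcdef]; linarith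
  have hA : Integrable (fun p : ℝ × ℝ => p.1 * p.2 * Real.exp (-(p.1 ^ 2 + p.2 ^ 2)) *
      Real.log p.1 * Real.log p.1) (μ.prod μ) := by
    refine Integrable.mono' hDD (Measurable.aestronglyMeasurable
      ((hwm.mul measurable_fst.log).mul measurable_fst.log)) ?_
    filter_upwards [hQmem] with p hp
    obtain ⟨hp1, hp2⟩ := hp
    rw [Real.norm_eq_abs]
    refine dom2 hp1 hp2 hc ?_
    have h6 := abs_nonneg (Real.log p.2)
    linarith
  have hB : Integrable (fun p : ℝ × ℝ => p.1 * p.2 * Real.exp (-(p.1 ^ 2 + p.2 ^ 2)) *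
      Real.log p.1) (μ.prod μ) := by
    refine Integrable.mono' hDD (Measurable.aestronglyMeasurable
      (hwm.mul measurable_fst.log)) ?_
    filter_upwards [hQmem] with p hp
    obtain ⟨hp1, hp2⟩ := hp
    rw [Real.norm_eq_abs, show p.1 * p.2 * Real.exp (-(p.1 ^ 2 + p.2 ^ 2)) * Real.log p.1
      = p.1 * p.2 * Real.exp (-(p.1 ^ 2 + p.2 ^ 2)) * Real.log p.1 * 1 from (mul_one _).symm]
    refine dom2 hp1 hp2 hc ?_
    have h5 := abs_nonneg (Real.log p.1)
    have h6 := abs_nonneg (Real.log p.2)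
    rw [abs_one]; linarith
  have hT2 : Integrable (fun p : ℝ × ℝ => p.1 * p.2 * Real.exp (-(p.1 ^ 2 + p.2 ^ 2)) *
      Real.log p.1 * max (Real.log (p.2 * Real.sin θ) - Real.log (p.1 * Real.cos θ)) 0)
      (μ.prod μ) := by
    refine Integrable.mono' hDD (Measurable.aestronglyMeasurable
      ((hwm.mul measurable_fst.log).mul
        ((((measurable_snd.mul_const _).log).sub ((measurable_fst.mul_const _).log)).max
          measurable_const))) ?_
    filter_upwards [hQmem] with p hp
    obtain ⟨hp1, hp2⟩ := hp
    rw [Real.norm_eq_abs]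
    refine dom2 hp1 hp2 hc ?_
    set X := Real.log (p.2 * Real.sin θ) - Real.log (p.1 * Real.cos θ) with hXdef
    have h1 : |max X 0| ≤ |X| := abs_le.mpr
      ⟨(neg_nonpos.mpr (abs_nonneg X)).trans (le_max_right X 0),
        max_le (le_abs_self X) (abs_nonneg X)⟩
    refine h1.trans ?_
    rw [hXdef, Real.log_mul (ne_of_gt hp2) hsin.ne', Real.log_mul (ne_of_gt hp1) hcos.ne']
    have h3 := abs_add_le (Real.log p.2) (Real.log (Real.sin θ))
    have h4 := abs_sub (Real.log p.2 + Real.log (Real.sin θ))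
      (Real.log p.1 + Real.log (Real.cos θ))
    have h5 := abs_add_le (Real.log p.1) (Real.log (Real.cos θ))
    rw [hcdef]
    linarith
  -- Step 1 : iterated = product
  have step1 : (∫ r1 in Set.Ioi (0:ℝ), ∫ r2 in Set.Ioi (0:ℝ),
      r1 * r2 * Real.exp (-(r1 ^ 2 + r2 ^ 2)) * Real.log r1 *
        Real.log (max (r1 * Real.cos θ) (r2 * Real.sin θ)))
      = ∫ p : ℝ × ℝ, (p.1 * p.2 * Real.exp (-(p.1 ^ 2 + p.2 ^ 2)) * Real.log p.1 *
          Real.log (max (p.1 * Real.cos θ) (p.2 * Real.sin θ))) ∂(μ.prod μ) :=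
    integral_integral hFfull
  -- Step 2 : split the integrand
  have key2 : (∫ p : ℝ × ℝ, (p.1 * p.2 * Real.exp (-(p.1 ^ 2 + p.2 ^ 2)) * Real.log p.1 *
        Real.log (max (p.1 * Real.cos θ) (p.2 * Real.sin θ))) ∂(μ.prod μ))
      = ((∫ p : ℝ × ℝ, (p.1 * p.2 * Real.exp (-(p.1 ^ 2 + p.2 ^ 2)) * Real.log p.1 *
            Real.log p.1) ∂(μ.prod μ))
          + Real.log (Real.cos θ) * ∫ p : ℝ × ℝ, (p.1 * p.2 *
              Real.exp (-(p.1 ^ 2 + p.2 ^ 2)) * Real.log p.1) ∂(μ.prod μ))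
        + ∫ p : ℝ × ℝ, (p.1 * p.2 * Real.exp (-(p.1 ^ 2 + p.2 ^ 2)) * Real.log p.1 *
            max (Real.log (p.2 * Real.sin θ) - Real.log (p.1 * Real.cos θ)) 0) ∂(μ.prod μ) := by
    have hsplit : (∫ p : ℝ × ℝ, (p.1 * p.2 * Real.exp (-(p.1 ^ 2 + p.2 ^ 2)) * Real.log p.1 *
        Real.log (max (p.1 * Real.cos θ) (p.2 * Real.sin θ))) ∂(μ.prod μ))
        = ∫ p : ℝ × ℝ, ((p.1 * p.2 * Real.exp (-(p.1 ^ 2 + p.2 ^ 2)) * Real.log p.1 *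
              Real.log p.1
            + Real.log (Real.cos θ) * (p.1 * p.2 * Real.exp (-(p.1 ^ 2 + p.2 ^ 2)) *
              Real.log p.1))
            + p.1 * p.2 * Real.exp (-(p.1 ^ 2 + p.2 ^ 2)) * Real.log p.1 *
              max (Real.log (p.2 * Real.sin θ) - Real.log (p.1 * Real.cos θ)) 0) ∂(μ.prod μ) := by
      refine integral_congr_ae ?_
      filter_upwards [hQmem] with p hp
      obtain ⟨hp1, hp2⟩ := hp
      rw [logmax_decomp hp1 hp2 hcos hsin]
      ring
    have hB' : Integrable (fun p : ℝ × ℝ => Real.log (Real.cos θ) *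
        (p.1 * p.2 * Real.exp (-(p.1 ^ 2 + p.2 ^ 2)) * Real.log p.1)) (μ.prod μ) :=
      hB.const_mul _
    have hAB : Integrable (fun p : ℝ × ℝ => p.1 * p.2 * Real.exp (-(p.1 ^ 2 + p.2 ^ 2)) *
        Real.log p.1 * Real.log p.1 + Real.log (Real.cos θ) *
        (p.1 * p.2 * Real.exp (-(p.1 ^ 2 + p.2 ^ 2)) * Real.log p.1)) (μ.prod μ) := hA.add hB'
    rw [hsplit, integral_add hAB hT2, integral_add hA hB', integral_const_mul]
  -- Step 3 : polar coordinates for the last piece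
  have hpolar : (∫ p : ℝ × ℝ, (p.1 * p.2 * Real.exp (-(p.1 ^ 2 + p.2 ^ 2)) * Real.log p.1 *
        max (Real.log (p.2 * Real.sin θ) - Real.log (p.1 * Real.cos θ)) 0) ∂(μ.prod μ))
      = ∫ ρ in Set.Ioi (0:ℝ), ∫ φ in (π / 2 - θ)..(π / 2),
          ρ ^ 3 * Real.exp (-ρ ^ 2) * Real.log (ρ * Real.cos φ) *
            Real.log (Real.tan φ * Real.tan θ) * Real.cos φ * Real.sin φ := by
    have hSmeas : MeasurableSet (Set.Ioi (0:ℝ) ×ˢ Set.Ioo (0:ℝ) (π/2)) :=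
      measurableSet_Ioi.prod measurableSet_Ioo
    have htθ : 0 < Real.tan θ := Real.tan_pos_of_pos_of_lt_pi_div_two hθ0 hθ2
    have e1 : (∫ p : ℝ × ℝ, (p.1 * p.2 * Real.exp (-(p.1 ^ 2 + p.2 ^ 2)) * Real.log p.1 *
        max (Real.log (p.2 * Real.sin θ) - Real.log (p.1 * Real.cos θ)) 0) ∂(μ.prod μ))
        = ∫ p : ℝ × ℝ, (Set.Ioi (0:ℝ) ×ˢ Set.Ioi (0:ℝ)).indicator
            (fun q => q.1 * q.2 * Real.exp (-(q.1 ^ 2 + q.2 ^ 2)) * Real.log q.1 *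
              max (Real.log (q.2 * Real.sin θ) - Real.log (q.1 * Real.cos θ)) 0) p := by
      rw [hμμ, ← integral_indicator hQmeas]
    have e2 := (integral_comp_polarCoord_symm ((Set.Ioi (0:ℝ) ×ˢ Set.Ioi (0:ℝ)).indicator
        (fun q => q.1 * q.2 * Real.exp (-(q.1 ^ 2 + q.2 ^ 2)) * Real.log q.1 *
          max (Real.log (q.2 * Real.sin θ) - Real.log (q.1 * Real.cos θ)) 0))).symm
    have e3 : (∫ p in polarCoord.target,
          p.1 • (Set.Ioi (0:ℝ) ×ˢ Set.Ioi (0:ℝ)).indicator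
            (fun q => q.1 * q.2 * Real.exp (-(q.1 ^ 2 + q.2 ^ 2)) * Real.log q.1 *
              max (Real.log (q.2 * Real.sin θ) - Real.log (q.1 * Real.cos θ)) 0)
            (polarCoord.symm p))
        = ∫ p in polarCoord.target,
            (Set.Ioi (0:ℝ) ×ˢ Set.Ioo (0:ℝ) (π/2)).indicator
              (fun z => z.1 * ((z.1 * Real.cos z.2) * (z.1 * Real.sin z.2) *
                Real.exp (-((z.1 * Real.cos z.2) ^ 2 + (z.1 * Real.sin z.2) ^ 2)) *
                Real.log (z.1 * Real.cos z.2) *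
                max (Real.log (z.1 * Real.sin z.2 * Real.sin θ) -
                  Real.log (z.1 * Real.cos z.2 * Real.cos θ)) 0)) p := by
      refine setIntegral_congr_fun polarCoord.open_target.measurableSet (fun p hp => ?_)
      rw [polarCoord_target] at hp
      obtain ⟨hρ, hφ⟩ := hp
      have hρ' : (0:ℝ) < p.1 := hρ
      rw [polarCoord_symm_apply]
      by_cases hmem : p.2 ∈ Set.Ioo (0:ℝ) (π/2)
      · have hcφ : 0 < Real.cos p.2 := Real.cos_pos_of_mem_Ioo ⟨by linarith [hmem.1], hmem.2⟩
        have hsφ : 0 < Real.sin p.2 := Real.sin_pos_of_pos_of_lt_pi hmem.1 (by linarith [hmem.2])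
        have hQin : ((p.1 * Real.cos p.2, p.1 * Real.sin p.2) : ℝ × ℝ) ∈
            Set.Ioi (0:ℝ) ×ˢ Set.Ioi (0:ℝ) :=
          Set.mem_prod.mpr ⟨mul_pos hρ' hcφ, mul_pos hρ' hsφ⟩
        have hSin : p ∈ Set.Ioi (0:ℝ) ×ˢ Set.Ioo (0:ℝ) (π/2) := Set.mem_prod.mpr ⟨hρ, hmem⟩
        rw [Set.indicator_of_mem hQin, Set.indicator_of_mem hSin]
        rw [smul_eq_mul]
      · have hQnot : ((p.1 * Real.cos p.2, p.1 * Real.sin p.2) : ℝ × ℝ) ∉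
            Set.Ioi (0:ℝ) ×ˢ Set.Ioi (0:ℝ) := by
          rintro ⟨ha, hb⟩
          have ha' : (0:ℝ) < p.1 * Real.cos p.2 := ha
          have hb' : (0:ℝ) < p.1 * Real.sin p.2 := hb
          have hcφ : 0 < Real.cos p.2 := by by_contra h; push_neg at h; nlinarith
          have hsφ : 0 < Real.sin p.2 := by by_contra h; push_neg at h; nlinarith
          have h02 : 0 < p.2 := by
            by_contra h; push_neg at h
            have := Real.sin_nonpos_of_nonpos_of_neg_pi_le h (le_of_lt hφ.1)
            linarith
          have hπ2 : p.2 < π/2 := by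
            by_contra h; push_neg at h
            have := Real.cos_nonpos_of_pi_div_two_le_of_le h (by linarith [hφ.2])
            linarith
          exact hmem ⟨h02, hπ2⟩
        rw [Set.indicator_of_notMem hQnot,
          Set.indicator_of_notMem (fun hps => hmem hps.2), smul_zero]
    have hsub : (Set.Ioi (0:ℝ) ×ˢ Set.Ioo (0:ℝ) (π/2)) ⊆ polarCoord.target := by
      rw [polarCoord_target]
      exact Set.prod_mono subset_rfl (Set.Ioo_subset_Ioo (by linarith) (by linarith))
    have e4 : (∫ p in polarCoord.target,
          (Set.Ioi (0:ℝ) ×ˢ Set.Ioo (0:ℝ) (π/2)).indicator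
            (fun z => z.1 * ((z.1 * Real.cos z.2) * (z.1 * Real.sin z.2) *
              Real.exp (-((z.1 * Real.cos z.2) ^ 2 + (z.1 * Real.sin z.2) ^ 2)) *
              Real.log (z.1 * Real.cos z.2) *
              max (Real.log (z.1 * Real.sin z.2 * Real.sin θ) -
                Real.log (z.1 * Real.cos z.2 * Real.cos θ)) 0)) p)
        = ∫ p in Set.Ioi (0:ℝ) ×ˢ Set.Ioo (0:ℝ) (π/2),
            p.1 * ((p.1 * Real.cos p.2) * (p.1 * Real.sin p.2) *
              Real.exp (-((p.1 * Real.cos p.2) ^ 2 + (p.1 * Real.sin p.2) ^ 2)) *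
              Real.log (p.1 * Real.cos p.2) *
              max (Real.log (p.1 * Real.sin p.2 * Real.sin θ) -
                Real.log (p.1 * Real.cos p.2 * Real.cos θ)) 0) := by
      rw [integral_indicator hSmeas, Measure.restrict_restrict hSmeas,
        Set.inter_eq_self_of_subset_left hsub]
    have hH_int : Integrable (Function.uncurry fun ρ φ => ρ * ((ρ * Real.cos φ) *
        (ρ * Real.sin φ) * Real.exp (-((ρ * Real.cos φ) ^ 2 + (ρ * Real.sin φ) ^ 2)) *
        Real.log (ρ * Real.cos φ) *
        max (Real.log (ρ * Real.sin φ * Real.sin θ) -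
          Real.log (ρ * Real.cos φ * Real.cos θ)) 0))
        ((volume.restrict (Set.Ioi 0)).prod (volume.restrict (Set.Ioo 0 (π/2)))) := by
      have hone : Integrable (fun _ : ℝ => (1:ℝ)) (volume.restrict (Set.Ioo 0 (π/2))) :=
        (integrableOn_const_iff (by simp)).mpr (Or.inr measure_Ioo_lt_top)
      have hdom : Integrable (fun z : ℝ × ℝ => (32 + 4*c) *
          ((z.1 ^ 3 * Real.exp (-z.1 ^ 2) * (1 + |Real.log z.1|) ^ 2) * 1))
          ((volume.restrict (Set.Ioi 0)).prod (volume.restrict (Set.Ioo 0 (π/2)))) :=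
        (intD3.mul_prod hone).const_mul _
      refine Integrable.mono' hdom ?_ ?_
      · have hpair : Measurable (fun z : ℝ × ℝ => (z.1 * Real.cos z.2, z.1 * Real.sin z.2)) :=
          (measurable_fst.mul measurable_snd.cos).prodMk (measurable_fst.mul measurable_snd.sin)
        have hT2m : Measurable (fun q : ℝ × ℝ => q.1 * q.2 * Real.exp (-(q.1 ^ 2 + q.2 ^ 2)) *
            Real.log q.1 * max (Real.log (q.2 * Real.sin θ) - Real.log (q.1 * Real.cos θ)) 0) :=
          (hwm.mul measurable_fst.log).mul
            ((((measurable_snd.mul_const _).log).sub ((measurable_fst.mul_const _).log)).max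
              measurable_const)
        exact (measurable_fst.mul (hT2m.comp hpair)).aestronglyMeasurable
      · have hmemS : ∀ᵐ z ∂((volume.restrict (Set.Ioi 0)).prod
            (volume.restrict (Set.Ioo 0 (π/2)))),
            z ∈ Set.Ioi (0:ℝ) ×ˢ Set.Ioo (0:ℝ) (π/2) := by
          rw [Measure.prod_restrict]; exact ae_restrict_mem hSmeas
        filter_upwards [hmemS] with z hz
        obtain ⟨hz1, hz2⟩ := hz
        have hρ' : (0:ℝ) < z.1 := hz1
        obtain ⟨hφ1, hφ2⟩ := hz2
        have hcφ : 0 < Real.cos z.2 := Real.cos_pos_of_mem_Ioo ⟨by linarith, hφ2⟩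
        have hsφ : 0 < Real.sin z.2 := Real.sin_pos_of_pos_of_lt_pi hφ1 (by linarith)
        have hexp : (z.1 * Real.cos z.2) ^ 2 + (z.1 * Real.sin z.2) ^ 2 = z.1 ^ 2 := by
          nlinarith [Real.sin_sq_add_cos_sq z.2]
        show ‖z.1 * ((z.1 * Real.cos z.2) * (z.1 * Real.sin z.2) *
            Real.exp (-((z.1 * Real.cos z.2) ^ 2 + (z.1 * Real.sin z.2) ^ 2)) *
            Real.log (z.1 * Real.cos z.2) *
            max (Real.log (z.1 * Real.sin z.2 * Real.sin θ) -
              Real.log (z.1 * Real.cos z.2 * Real.cos θ)) 0)‖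
          ≤ (32 + 4*c) * ((z.1 ^ 3 * Real.exp (-z.1 ^ 2) * (1 + |Real.log z.1|) ^ 2) * 1)
        rw [Real.norm_eq_abs, hexp]
        have hLn : (0:ℝ) ≤ |Real.log z.1| := abs_nonneg _
        have hlcn : (0:ℝ) ≤ |Real.log (Real.cos z.2)| := abs_nonneg _
        have hlsn : (0:ℝ) ≤ |Real.log (Real.sin z.2)| := abs_nonneg _
        have hlg : |Real.log (z.1 * Real.cos z.2)| ≤ |Real.log z.1| +
            |Real.log (Real.cos z.2)| := by
          rw [Real.log_mul hρ'.ne' hcφ.ne']; exact abs_add_le _ _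
        have hM : |max (Real.log (z.1 * Real.sin z.2 * Real.sin θ) -
            Real.log (z.1 * Real.cos z.2 * Real.cos θ)) 0| ≤
            |Real.log (Real.sin z.2)| + |Real.log (Real.cos z.2)| + c := by
          have h1 : |max (Real.log (z.1 * Real.sin z.2 * Real.sin θ) -
              Real.log (z.1 * Real.cos z.2 * Real.cos θ)) 0| ≤
              |Real.log (z.1 * Real.sin z.2 * Real.sin θ) -
                Real.log (z.1 * Real.cos z.2 * Real.cos θ)| :=
            abs_le.mpr ⟨(neg_nonpos.mpr (abs_nonneg _)).trans (le_max_right _ 0),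
              max_le (le_abs_self _) (abs_nonneg _)⟩
          refine h1.trans ?_
          have hMX : Real.log (z.1 * Real.sin z.2 * Real.sin θ) -
              Real.log (z.1 * Real.cos z.2 * Real.cos θ)
              = (Real.log (Real.sin z.2) - Real.log (Real.cos z.2)) +
                (Real.log (Real.sin θ) - Real.log (Real.cos θ)) := by
            rw [Real.log_mul (mul_pos hρ' hsφ).ne' hsin.ne', Real.log_mul hρ'.ne' hsφ.ne',
              Real.log_mul (mul_pos hρ' hcφ).ne' hcos.ne', Real.log_mul hρ'.ne' hcφ.ne']
            ring
          rw [hMX]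
          have h2 := abs_add_le (Real.log (Real.sin z.2) - Real.log (Real.cos z.2))
            (Real.log (Real.sin θ) - Real.log (Real.cos θ))
          have h3 := abs_sub (Real.log (Real.sin z.2)) (Real.log (Real.cos z.2))
          have h4 := abs_sub (Real.log (Real.sin θ)) (Real.log (Real.cos θ))
          rw [hcdef]
          linarith
        obtain ⟨hc4, hc16⟩ := ulog_bounds hcφ (Real.cos_le_one z.2)
        obtain ⟨hs4, -⟩ := ulog_bounds hsφ (Real.sin_le_one z.2)
        have keyφ : (Real.cos z.2 * Real.sin z.2) *
            ((|Real.log z.1| + |Real.log (Real.cos z.2)|) *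
              (|Real.log (Real.sin z.2)| + |Real.log (Real.cos z.2)| + c))
            ≤ (32 + 4*c) * (1 + |Real.log z.1|) ^ 2 := by
          have t1 : Real.cos z.2 * (Real.sin z.2 * |Real.log (Real.sin z.2)|) ≤ 4 :=
            (mul_le_of_le_one_left (mul_nonneg hsφ.le hlsn) (Real.cos_le_one z.2)).trans hs4
          have t2 : Real.sin z.2 * (Real.cos z.2 * |Real.log (Real.cos z.2)|) ≤ 4 :=
            (mul_le_of_le_one_left (mul_nonneg hcφ.le hlcn) (Real.sin_le_one z.2)).trans hc4
          have t3 : (Real.cos z.2 * |Real.log (Real.cos z.2)|) *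
              (Real.sin z.2 * |Real.log (Real.sin z.2)|) ≤ 16 :=
            (mul_le_mul hc4 hs4 (mul_nonneg hsφ.le hlsn) (by linarith)).trans_eq (by norm_num)
          have t4 : Real.sin z.2 * (Real.cos z.2 * |Real.log (Real.cos z.2)| ^ 2) ≤ 16 :=
            (mul_le_of_le_one_left (mul_nonneg hcφ.le (by positivity))
              (Real.sin_le_one z.2)).trans hc16
          have t5 : Real.cos z.2 * Real.sin z.2 ≤ 1 :=
            (mul_le_of_le_one_left hsφ.le (Real.cos_le_one z.2)).trans (Real.sin_le_one z.2)
          have hLc : (0:ℝ) ≤ |Real.log z.1| * c := mul_nonneg hLn hc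
          have u1 : |Real.log z.1| * (Real.cos z.2 * (Real.sin z.2 *
              |Real.log (Real.sin z.2)|)) ≤ |Real.log z.1| * 4 :=
            mul_le_mul_of_nonneg_left t1 hLn
          have u2 : |Real.log z.1| * (Real.sin z.2 * (Real.cos z.2 *
              |Real.log (Real.cos z.2)|)) ≤ |Real.log z.1| * 4 :=
            mul_le_mul_of_nonneg_left t2 hLn
          have u3 : (|Real.log z.1| * c) * (Real.cos z.2 * Real.sin z.2) ≤
              (|Real.log z.1| * c) * 1 := mul_le_mul_of_nonneg_left t5 hLc
          have u4 : c * (Real.sin z.2 * (Real.cos z.2 * |Real.log (Real.cos z.2)|)) ≤ c * 4 :=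
            mul_le_mul_of_nonneg_left t2 hc
          nlinarith [u1, u2, u3, u4, t3, t4, hLn, hc, mul_nonneg hLn hc, sq_nonneg
            (|Real.log z.1|), mul_nonneg hc (sq_nonneg (|Real.log z.1|))]
        calc |z.1 * ((z.1 * Real.cos z.2) * (z.1 * Real.sin z.2) * Real.exp (-z.1 ^ 2) *
              Real.log (z.1 * Real.cos z.2) *
              max (Real.log (z.1 * Real.sin z.2 * Real.sin θ) -
                Real.log (z.1 * Real.cos z.2 * Real.cos θ)) 0)|
            = (z.1 ^ 3 * Real.exp (-z.1 ^ 2)) * ((Real.cos z.2 * Real.sin z.2) *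
              (|Real.log (z.1 * Real.cos z.2)| *
                |max (Real.log (z.1 * Real.sin z.2 * Real.sin θ) -
                  Real.log (z.1 * Real.cos z.2 * Real.cos θ)) 0|)) := by
              rw [abs_mul, abs_mul, abs_mul, abs_mul, abs_mul, abs_of_pos hρ',
                abs_of_pos (mul_pos hρ' hcφ), abs_of_pos (mul_pos hρ' hsφ),
                abs_of_pos (Real.exp_pos _)]
              ring
          _ ≤ (z.1 ^ 3 * Real.exp (-z.1 ^ 2)) * ((Real.cos z.2 * Real.sin z.2) *
              ((|Real.log z.1| + |Real.log (Real.cos z.2)|) *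
                (|Real.log (Real.sin z.2)| + |Real.log (Real.cos z.2)| + c))) := by
              refine mul_le_mul_of_nonneg_left (mul_le_mul_of_nonneg_left
                (mul_le_mul hlg hM (abs_nonneg _) (by positivity)) ?_) (by positivity)
              positivity
          _ ≤ (z.1 ^ 3 * Real.exp (-z.1 ^ 2)) * ((32 + 4*c) * (1 + |Real.log z.1|) ^ 2) := by
              exact mul_le_mul_of_nonneg_left keyφ (by positivity)
          _ = (32 + 4*c) * ((z.1 ^ 3 * Real.exp (-z.1 ^ 2) *
              (1 + |Real.log z.1|) ^ 2) * 1) := by ring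
    have hrs : ((volume : Measure ℝ).restrict (Set.Ioi 0)).prod
        ((volume : Measure ℝ).restrict (Set.Ioo 0 (π/2)))
        = (volume : Measure (ℝ × ℝ)).restrict (Set.Ioi (0:ℝ) ×ˢ Set.Ioo (0:ℝ) (π/2)) := by
      rw [Measure.prod_restrict, ← Measure.volume_eq_prod]
    have e5 : (∫ p in Set.Ioi (0:ℝ) ×ˢ Set.Ioo (0:ℝ) (π/2),
          p.1 * ((p.1 * Real.cos p.2) * (p.1 * Real.sin p.2) *
            Real.exp (-((p.1 * Real.cos p.2) ^ 2 + (p.1 * Real.sin p.2) ^ 2)) *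
            Real.log (p.1 * Real.cos p.2) *
            max (Real.log (p.1 * Real.sin p.2 * Real.sin θ) -
              Real.log (p.1 * Real.cos p.2 * Real.cos θ)) 0))
        = ∫ ρ in Set.Ioi (0:ℝ), ∫ φ in Set.Ioo (0:ℝ) (π/2),
            ρ * ((ρ * Real.cos φ) * (ρ * Real.sin φ) *
              Real.exp (-((ρ * Real.cos φ) ^ 2 + (ρ * Real.sin φ) ^ 2)) *
              Real.log (ρ * Real.cos φ) *
              max (Real.log (ρ * Real.sin φ * Real.sin θ) -
                Real.log (ρ * Real.cos φ * Real.cos θ)) 0) := by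
      rw [← hrs]
      exact (integral_integral hH_int).symm
    have e6 : (∫ ρ in Set.Ioi (0:ℝ), ∫ φ in Set.Ioo (0:ℝ) (π/2),
          ρ * ((ρ * Real.cos φ) * (ρ * Real.sin φ) *
            Real.exp (-((ρ * Real.cos φ) ^ 2 + (ρ * Real.sin φ) ^ 2)) *
            Real.log (ρ * Real.cos φ) *
            max (Real.log (ρ * Real.sin φ * Real.sin θ) -
              Real.log (ρ * Real.cos φ * Real.cos θ)) 0))
        = ∫ ρ in Set.Ioi (0:ℝ), ∫ φ in (π / 2 - θ)..(π / 2),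
            ρ ^ 3 * Real.exp (-ρ ^ 2) * Real.log (ρ * Real.cos φ) *
              Real.log (Real.tan φ * Real.tan θ) * Real.cos φ * Real.sin φ := by
      refine setIntegral_congr_fun measurableSet_Ioi (fun ρ hρ => ?_)
      have hρ' : (0:ℝ) < ρ := hρ
      have hstep : Set.EqOn (fun φ => ρ * ((ρ * Real.cos φ) * (ρ * Real.sin φ) *
          Real.exp (-((ρ * Real.cos φ) ^ 2 + (ρ * Real.sin φ) ^ 2)) *
          Real.log (ρ * Real.cos φ) *
          max (Real.log (ρ * Real.sin φ * Real.sin θ) -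
            Real.log (ρ * Real.cos φ * Real.cos θ)) 0))
          ((Set.Ioo (π/2 - θ) (π/2)).indicator (fun φ => ρ ^ 3 * Real.exp (-ρ ^ 2) *
            Real.log (ρ * Real.cos φ) * Real.log (Real.tan φ * Real.tan θ) *
            Real.cos φ * Real.sin φ))
          (Set.Ioo 0 (π/2)) := by
        intro φ hφ
        obtain ⟨hφ1, hφ2⟩ := hφ
        have hcφ : 0 < Real.cos φ := Real.cos_pos_of_mem_Ioo ⟨by linarith, hφ2⟩
        have hsφ : 0 < Real.sin φ := Real.sin_pos_of_pos_of_lt_pi hφ1 (by linarith)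
        have htφ : 0 < Real.tan φ := Real.tan_pos_of_pos_of_lt_pi_div_two hφ1 hφ2
        have hexp : (ρ * Real.cos φ) ^ 2 + (ρ * Real.sin φ) ^ 2 = ρ ^ 2 := by
          nlinarith [Real.sin_sq_add_cos_sq φ]
        have hX : Real.log (ρ * Real.sin φ * Real.sin θ) -
            Real.log (ρ * Real.cos φ * Real.cos θ)
            = Real.log (Real.tan φ * Real.tan θ) := by
          rw [Real.log_mul (mul_pos hρ' hsφ).ne' hsin.ne', Real.log_mul hρ'.ne' hsφ.ne',
            Real.log_mul (mul_pos hρ' hcφ).ne' hcos.ne', Real.log_mul hρ'.ne' hcφ.ne',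
            Real.log_mul htφ.ne' htθ.ne', Real.tan_eq_sin_div_cos, Real.tan_eq_sin_div_cos,
            Real.log_div hsφ.ne' hcφ.ne', Real.log_div hsin.ne' hcos.ne']
          ring
        simp only
        rw [hexp, hX]
        by_cases hm : φ ∈ Set.Ioo (π/2 - θ) (π/2)
        · have hlt : Real.tan (π/2 - θ) < Real.tan φ :=
            Real.strictMonoOn_tan ⟨by linarith, by linarith⟩ ⟨by linarith, hφ2⟩ hm.1
          rw [Real.tan_pi_div_two_sub] at hlt
          have h1t : 1 ≤ Real.tan φ * Real.tan θ := by
            have := mul_lt_mul_of_pos_right hlt htθ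
            rw [inv_mul_cancel₀ htθ.ne'] at this
            linarith
          rw [Set.indicator_of_mem hm, max_eq_left (Real.log_nonneg h1t)]
          ring
        · have hle : φ ≤ π/2 - θ := by
            by_contra h; push_neg at h; exact hm ⟨h, hφ2⟩
          have hmono : Real.tan φ ≤ Real.tan (π/2 - θ) :=
            Real.strictMonoOn_tan.monotoneOn ⟨by linarith, hφ2⟩ ⟨by linarith, by linarith⟩ hle
          rw [Real.tan_pi_div_two_sub] at hmono
          have hle1 : Real.tan φ * Real.tan θ ≤ 1 := by
            have := mul_le_mul_of_nonneg_right hmono htθ.le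
            rw [inv_mul_cancel₀ htθ.ne'] at this
            linarith
          rw [Set.indicator_of_notMem hm,
            max_eq_right (Real.log_nonpos (mul_pos htφ htθ).le hle1)]
          ring
      calc (∫ φ in Set.Ioo (0:ℝ) (π/2),
            ρ * ((ρ * Real.cos φ) * (ρ * Real.sin φ) *
              Real.exp (-((ρ * Real.cos φ) ^ 2 + (ρ * Real.sin φ) ^ 2)) *
              Real.log (ρ * Real.cos φ) *
              max (Real.log (ρ * Real.sin φ * Real.sin θ) -
                Real.log (ρ * Real.cos φ * Real.cos θ)) 0))
          = ∫ φ in Set.Ioo (0:ℝ) (π/2),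
              (Set.Ioo (π/2 - θ) (π/2)).indicator (fun φ => ρ ^ 3 * Real.exp (-ρ ^ 2) *
                Real.log (ρ * Real.cos φ) * Real.log (Real.tan φ * Real.tan θ) *
                Real.cos φ * Real.sin φ) φ :=
            setIntegral_congr_fun measurableSet_Ioo hstep
        _ = ∫ φ in Set.Ioo (π/2 - θ) (π/2), ρ ^ 3 * Real.exp (-ρ ^ 2) *
              Real.log (ρ * Real.cos φ) * Real.log (Real.tan φ * Real.tan θ) *
              Real.cos φ * Real.sin φ := by
            rw [integral_indicator measurableSet_Ioo,
              Measure.restrict_restrict measurableSet_Ioo,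
              Set.inter_eq_self_of_subset_left (Set.Ioo_subset_Ioo (by linarith) le_rfl)]
        _ = ∫ φ in (π / 2 - θ)..(π / 2), ρ ^ 3 * Real.exp (-ρ ^ 2) *
              Real.log (ρ * Real.cos φ) * Real.log (Real.tan φ * Real.tan θ) *
              Real.cos φ * Real.sin φ := by
            rw [intervalIntegral.integral_of_le (by linarith), integral_Ioc_eq_integral_Ioo]
    exact ((((e1.trans e2).trans e3).trans e4).trans e5).trans e6
  rw [step1, key2, hpolar]
  ring
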